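/- arXiv:1410.0142 — 2 statements merged into one kernel-verified Lean document; each statement's English description precedes it below -/
import Mathlib

section
/- Let r,s,t,u be positive integers with ru−st = ±1. Then the abelianization of G(r,s,t,u) is isomorphic to ℤ/4tℤ × ℤ/4ℤ if s is odd, and to ℤ/4tℤ × ℤ/2ℤ × ℤ/2ℤ if s is even. -/
/-!
Abelianizing, the relators of `G(r,s,t,u)` become `2b = 0`, `2c = 2r·a + s·b` and
`4t·a + 2u·b = 0`. In the generators `a`, `b` and `w = c - r·a` these are equivalent to
`2b = 0`, `4t·a = 0`, `2w = s·b`. For `s` odd this forces `b = 2w`, so `a` and `w` generate `ℤ/4t × ℤ/4`; for `s` even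
it gives `2w = 0`, and `a`, `b`, `w` generate `ℤ/4t × ℤ/2 × ℤ/2`.
-/

/-- The relators of the presentation of the fundamental group of the sapphire
Sol 3-manifold determined by the matrix `[[r, s], [t, u]]`:
`a·b·a⁻¹·b`, `c²·a^(−2r)·b^(−s)` and `c·a^(2t)·b^u·c⁻¹·a^(2t)·b^u`,
where `a, b, c` are the generators `of 0, of 1, of 2`. -/
def sapphireRels (r s t u : ℤ) : Set (FreeGroup (Fin 3)) :=
  { FreeGroup.of 0 * FreeGroup.of 1 * (FreeGroup.of 0)⁻¹ * FreeGroup.of 1,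
    FreeGroup.of 2 ^ (2 : ℤ) * FreeGroup.of 0 ^ (-(2 * r)) * FreeGroup.of 1 ^ (-s),
    FreeGroup.of 2 * FreeGroup.of 0 ^ (2 * t) * FreeGroup.of 1 ^ u * (FreeGroup.of 2)⁻¹ *
      FreeGroup.of 0 ^ (2 * t) * FreeGroup.of 1 ^ u }

/-- The fundamental group `G(r,s,t,u)` of the sapphire Sol 3-manifold. -/
abbrev SapphireGroup (r s t u : ℤ) := PresentedGroup (sapphireRels r s t u)

namespace ZMod

variable {A : Type*} [AddGroup A]

def homOfNSMulEqZero (n : ℕ) (a : A) (ha : n • a = 0) : ZMod n →+ A :=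
  ZMod.lift n ⟨zmultiplesHom A a, by simpa using ha⟩

@[simp]
theorem homOfNSMulEqZero_one (n : ℕ) (a : A) (ha : n • a = 0) :
    homOfNSMulEqZero n a ha 1 = a := by
  simpa [homOfNSMulEqZero] using ZMod.lift_coe n ⟨zmultiplesHom A a, by simpa using ha⟩ 1

@[simp]
theorem homOfNSMulEqZero_intCast (n : ℕ) (a : A) (ha : n • a = 0) (k : ℤ) :
    homOfNSMulEqZero n a ha k = k • a := by
  rw [← zsmul_one, map_zsmul, homOfNSMulEqZero_one]

@[simp]
theorem homOfNSMulEqZero_ofNat (n : ℕ) (a : A) (ha : n • a = 0) (m : ℕ) [m.AtLeastTwo] :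
    homOfNSMulEqZero n a ha ofNat(m) = (ofNat(m) : ℕ) • a := by
  simpa [Nat.cast_ofNat] using map_nsmul (homOfNSMulEqZero n a ha) (OfNat.ofNat m) 1

@[ext]
theorem addMonoidHom_ext {n : ℕ} {f g : ZMod n →+ A} (h : f 1 = g 1) : f = g :=
  (AddMonoidHom.cancel_right ZMod.intCast_surjective).1 <|
    AddMonoidHom.ext_int (f := f.comp (Int.castAddHom _)) (by simpa using h)

end ZMod

@[ext]
theorem AddMonoidHom.prod_ext {M N P : Type*} [AddZeroClass M] [AddZeroClass N] [AddCommMonoid P]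
    {f g : M × N →+ P} (hl : f.comp (inl M N) = g.comp (inl M N))
    (hr : f.comp (inr M N) = g.comp (inr M N)) : f = g := by
  rw [← f.coprod_unique, ← g.coprod_unique, hl, hr]

section Relations

variable {A : Type*} [AddCommGroup A] {r s t u : ℤ}

def SapphireRelations (r s t u : ℤ) (a b c : A) : Prop :=
  2 • b = 0 ∧ 2 • c = (2 * r) • a + s • b ∧ (4 * t) • a + (2 * u) • b = 0

theorem forall_map_sapphireRels_eq_one_iff (φ : FreeGroup (Fin 3) →* Multiplicative A) :
    (∀ w ∈ sapphireRels r s t u, φ w = 1) ↔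
      SapphireRelations r s t u (φ (.of 0)).toAdd (φ (.of 1)).toAdd (φ (.of 2)).toAdd := by
  simp only [sapphireRels, Set.mem_insert_iff, Set.mem_singleton_iff, forall_eq_or_imp, forall_eq,
    SapphireRelations, map_mul, map_inv, map_zpow, ← toAdd_eq_zero, toAdd_mul, toAdd_inv,
    toAdd_zpow]
  refine and_congr ?_ (and_congr ?_ ?_) <;>
    constructor <;> intro h <;> linear_combination (norm := module) h

namespace SapphireRelations

variable {a b c : A}

theorem two_smul_right (h : SapphireRelations r s t u a b c) : 2 • b = 0 := h.1

theorem nsmul_left {N : ℕ} (h : SapphireRelations r s t u a b c) (hN : (N : ℤ) = 4 * t) :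
    N • a = 0 := by
  rw [← natCast_zsmul, hN]
  linear_combination (norm := module) h.2.2 - u • h.1

theorem two_smul_sub (h : SapphireRelations r s t u a b c) : 2 • (c - r • a) = s • b := by
  linear_combination (norm := module) h.2.1

theorem four_smul_sub (h : SapphireRelations r s t u a b c) : 4 • (c - r • a) = 0 := by
  linear_combination (norm := module) 2 • h.two_smul_sub + s • h.1

theorem two_smul_sub_of_odd (h : SapphireRelations r s t u a b c) (hs : Odd s) :
    2 • (c - r • a) = b := by
  obtain ⟨k, rfl⟩ := hs
  linear_combination (norm := module) h.two_smul_sub + k • h.1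

theorem two_smul_sub_of_even (h : SapphireRelations r s t u a b c) (hs : Even s) :
    2 • (c - r • a) = 0 := by
  obtain ⟨k, rfl⟩ := hs
  linear_combination (norm := module) h.two_smul_sub + k • h.1

end SapphireRelations

end Relations

namespace SapphireGroup

variable {A : Type*} [AddCommGroup A] (r s t u : ℤ)

def gen (i : Fin 3) : Additive (Abelianization (SapphireGroup r s t u)) :=
  .ofMul (.of (.of i))

theorem sapphireRelations_gen :
    SapphireRelations r s t u (gen r s t u 0) (gen r s t u 1) (gen r s t u 2) :=
  (forall_map_sapphireRels_eq_one_iff (A := Additive (Abelianization (SapphireGroup r s t u)))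
    ((MulEquiv.toMultiplicative_toAdditive (G := Abelianization (SapphireGroup r s t u))).symm
      |>.toMonoidHom.comp (Abelianization.of.comp (PresentedGroup.mk _)))).1 fun w hw => by
    rw [MonoidHom.comp_apply, MonoidHom.comp_apply, PresentedGroup.one_of_mem hw, map_one, map_one]

variable {r s t u}

def liftAdd (a b c : A) (h : SapphireRelations r s t u a b c) :
    Additive (Abelianization (SapphireGroup r s t u)) →+ A :=
  MonoidHom.toAdditiveLeft <| Abelianization.lift <|
    PresentedGroup.toGroup (f := fun i => Multiplicative.ofAdd (![a, b, c] i))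
      ((forall_map_sapphireRels_eq_one_iff _).2 (by simpa using h))

@[simp]
theorem liftAdd_gen (a b c : A) (h : SapphireRelations r s t u a b c) (i : Fin 3) :
    liftAdd a b c h (gen r s t u i) = ![a, b, c] i := by
  simp [liftAdd, gen]

theorem addMonoidHom_ext {f g : Additive (Abelianization (SapphireGroup r s t u)) →+ A}
    (h : ∀ i, f (gen r s t u i) = g (gen r s t u i)) : f = g :=
  MonoidHom.toAdditiveLeft.symm.injective <| Abelianization.hom_ext _ _ <| PresentedGroup.ext h

theorem sapphireRelations_zmod_of_odd (N : ℕ) (hN : (N : ℤ) = 4 * t) (hs : Odd s) :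
    SapphireRelations r s t u ((1, 0) : ZMod N × ZMod 4) (0, 2) (r, 1) := by
  have hN' : ((4 * t : ℤ) : ZMod N) = 0 := by rw [← hN, Int.cast_natCast, ZMod.natCast_self]
  obtain ⟨k, rfl⟩ := hs
  refine ⟨?_, ?_, ?_⟩ <;> ext <;> simp <;> grind

theorem sapphireRelations_zmod_of_even (N : ℕ) (hN : (N : ℤ) = 4 * t) (hs : Even s) :
    SapphireRelations r s t u ((1, 0, 0) : ZMod N × ZMod 2 × ZMod 2) (0, 1, 0) (r, 0, 1) := by
  have hN' : ((4 * t : ℤ) : ZMod N) = 0 := by rw [← hN, Int.cast_natCast, ZMod.natCast_self]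
  obtain ⟨k, rfl⟩ := hs
  refine ⟨?_, ?_, ?_⟩ <;> ext <;> simp <;> grind

def addEquivOfOdd (N : ℕ) (hN : (N : ℤ) = 4 * t) (hs : Odd s) :
    Additive (Abelianization (SapphireGroup r s t u)) ≃+ ZMod N × ZMod 4 :=
  have h := sapphireRelations_gen r s t u
  AddMonoidHom.toAddEquiv (liftAdd _ _ _ (sapphireRelations_zmod_of_odd N hN hs))
    ((ZMod.homOfNSMulEqZero N (gen r s t u 0) (h.nsmul_left hN)).coprod
      (ZMod.homOfNSMulEqZero 4 (gen r s t u 2 - r • gen r s t u 0) h.four_smul_sub))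
    (addMonoidHom_ext fun i => by fin_cases i <;> simp [h.two_smul_sub_of_odd hs])
    (by ext <;> simp)

def addEquivOfEven (N : ℕ) (hN : (N : ℤ) = 4 * t) (hs : Even s) :
    Additive (Abelianization (SapphireGroup r s t u)) ≃+ ZMod N × ZMod 2 × ZMod 2 :=
  have h := sapphireRelations_gen r s t u
  AddMonoidHom.toAddEquiv (liftAdd _ _ _ (sapphireRelations_zmod_of_even N hN hs))
    ((ZMod.homOfNSMulEqZero N (gen r s t u 0) (h.nsmul_left hN)).coprod
      ((ZMod.homOfNSMulEqZero 2 (gen r s t u 1) h.two_smul_right).coprod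
        (ZMod.homOfNSMulEqZero 2 (gen r s t u 2 - r • gen r s t u 0)
          (h.two_smul_sub_of_even hs))))
    (addMonoidHom_ext fun i => by fin_cases i <;> simp)
    (by ext <;> simp)

end SapphireGroup

theorem stmt18_general (r s t u : ℤ) (ht : 0 < t) :
    (Odd s → Nonempty (Abelianization (SapphireGroup r s t u) ≃*
      Multiplicative (ZMod (4 * t).toNat × ZMod 4))) ∧
    (Even s → Nonempty (Abelianization (SapphireGroup r s t u) ≃*
      Multiplicative (ZMod (4 * t).toNat × ZMod 2 × ZMod 2))) := by
  have hN : (((4 * t).toNat : ℕ) : ℤ) = 4 * t := Int.toNat_of_nonneg (by positivity)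
  exact ⟨fun hs => ⟨AddEquiv.toMultiplicativeRight (SapphireGroup.addEquivOfOdd _ hN hs)⟩,
    fun hs => ⟨AddEquiv.toMultiplicativeRight (SapphireGroup.addEquivOfEven _ hN hs)⟩⟩

theorem stmt18 (r s t u : ℤ) (hr : 0 < r) (hs : 0 < s) (ht : 0 < t) (hu : 0 < u)
    (h : r * u - s * t = 1 ∨ r * u - s * t = -1) :
    (Odd s → Nonempty (Abelianization (SapphireGroup r s t u) ≃*
      Multiplicative (ZMod (4 * t).toNat × ZMod 4))) ∧
    (Even s → Nonempty (Abelianization (SapphireGroup r s t u) ≃*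
      Multiplicative (ZMod (4 * t).toNat × ZMod 2 × ZMod 2))) :=
  stmt18_general r s t u ht
end

section
/- Let r,s,t,u be integers with ru−st = ±1 and t ≠ 0. Then the abelianization of G(r,s,t,u) is a finite group. -/
theorem CommGroup.finite_of_closure_eq_top_of_isOfFinOrder {G : Type*} [CommGroup G] {S : Set G}
    (hfin : S.Finite) (hS : Subgroup.closure S = ⊤) (htors : ∀ g ∈ S, IsOfFinOrder g) :
    Finite G :=
  have : Group.FG G := Group.fg_iff.2 ⟨S, hS, hfin⟩
  CommGroup.finite_of_fg_isMulTorsion G <| (torsion_eq_top_iff (G := G)).1 <|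
    top_le_iff.1 (hS ▸ (Subgroup.closure_le _).2 htors)

theorem Abelianization.closure_image_of_eq_top {G : Type*} [Group G] {S : Set G}
    (hS : Subgroup.closure S = ⊤) : Subgroup.closure (of '' S) = ⊤ := by
  rw [← MonoidHom.map_closure, hS, ← MonoidHom.range_eq_map, MonoidHom.range_eq_top]
  exact QuotientGroup.mk_surjective

theorem PresentedGroup.lift_comp_of_eq_one_of_mem {α H : Type*} [Group H]
    {rels : Set (FreeGroup α)} (f : PresentedGroup rels →* H) {x : FreeGroup α} (hx : x ∈ rels) :
    FreeGroup.lift (f ∘ of) x = 1 := by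
  rw [show FreeGroup.lift (f ∘ of) = f.comp (mk rels) from
      FreeGroup.ext_hom _ _ fun _ ↦ FreeGroup.lift_apply_of,
    MonoidHom.comp_apply, one_of_mem hx, map_one]

section CommGroup

variable {G : Type*} [CommGroup G] {a b c : G}

theorem zpow_two_eq_one_of_mul_mul_inv_mul_eq_one (h : a * b * a⁻¹ * b = 1) :
    b ^ (2 : ℤ) = 1 := by
  rwa [mul_inv_cancel_comm, ← zpow_two] at h

theorem zpow_eq_one_of_sapphire_relators {r s t u : ℤ} (h₁ : a * b * a⁻¹ * b = 1)
    (h₂ : c ^ (2 : ℤ) * a ^ (-(2 * r)) * b ^ (-s) = 1)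
    (h₃ : c * a ^ (2 * t) * b ^ u * c⁻¹ * a ^ (2 * t) * b ^ u = 1) :
    a ^ (4 * t) = 1 ∧ b ^ (2 : ℤ) = 1 ∧ c ^ (8 * t) = 1 := by
  have hb := zpow_two_eq_one_of_mul_mul_inv_mul_eq_one h₁
  have hab : (a ^ (2 * t) * b ^ u) ^ (2 : ℤ) = 1 :=
    zpow_two_eq_one_of_mul_mul_inv_mul_eq_one (by simpa only [mul_assoc] using h₃)
  have ha : a ^ (4 * t) = 1 := by
    rwa [mul_zpow, ← zpow_mul, ← zpow_mul, mul_comm u, zpow_mul b 2 u, hb, one_zpow, mul_one,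
      show 2 * t * 2 = 4 * t by ring] at hab
  have hc : c ^ (2 : ℤ) = a ^ (2 * r) * b ^ s := by
    rwa [zpow_neg, zpow_neg, mul_assoc, ← mul_inv_rev, mul_inv_eq_one, mul_comm (b ^ s)] at h₂
  refine ⟨ha, hb, ?_⟩
  calc c ^ (8 * t) = (c ^ (2 : ℤ)) ^ (4 * t) := by rw [← zpow_mul]; ring_nf
    _ = (a ^ (4 * t)) ^ (2 * r) * (b ^ (2 : ℤ)) ^ (2 * s * t) := by
      rw [hc, mul_zpow, ← zpow_mul, ← zpow_mul, ← zpow_mul, ← zpow_mul]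
      congr 2 <;> ring
    _ = 1 := by rw [ha, hb, one_zpow, one_zpow, one_mul]

end CommGroup

theorem stmt19_general (r s t u : ℤ) (ht : t ≠ 0) :
    Finite (Abelianization (SapphireGroup r s t u)) := by
  set g : Fin 3 → Abelianization (SapphireGroup r s t u) := Abelianization.of ∘ PresentedGroup.of
  have hrel : ∀ x ∈ sapphireRels r s t u, FreeGroup.lift g x = 1 :=
    fun _ ↦ PresentedGroup.lift_comp_of_eq_one_of_mem Abelianization.of
  have h₁ := hrel _ (Set.mem_insert _ _)
  have h₂ := hrel _ (Set.mem_insert_of_mem _ (Set.mem_insert _ _))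
  have h₃ := hrel _ (Set.mem_insert_of_mem _ (Set.mem_insert_of_mem _ rfl))
  simp only [map_mul, map_inv, map_zpow, FreeGroup.lift_apply_of] at h₁ h₂ h₃
  obtain ⟨ha, hb, hc⟩ := zpow_eq_one_of_sapphire_relators h₁ h₂ h₃
  refine CommGroup.finite_of_closure_eq_top_of_isOfFinOrder (Set.finite_range g) ?_ ?_
  · rw [Set.range_comp]
    exact Abelianization.closure_image_of_eq_top (PresentedGroup.closure_range_of _)
  · rintro _ ⟨i, rfl⟩
    fin_cases i
    exacts [isOfFinOrder_iff_zpow_eq_one.2 ⟨4 * t, by omega, ha⟩,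
      isOfFinOrder_iff_zpow_eq_one.2 ⟨2, two_ne_zero, hb⟩,
      isOfFinOrder_iff_zpow_eq_one.2 ⟨8 * t, by omega, hc⟩]

theorem stmt19 (r s t u : ℤ) (h : r * u - s * t = 1 ∨ r * u - s * t = -1) (ht : t ≠ 0) :
    Finite (Abelianization (SapphireGroup r s t u)) :=
  stmt19_general r s t u ht
end
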